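/- arXiv:2104.09258 — 3 statements merged into one kernel-verified Lean document; each statement's English description precedes it below -/
import Mathlib

section
/- With the notation of a Hopf–Galois extension B ⊆ A with translation map τ, for all h, k ∈ H one has (hk)⁽¹⁾ ⊗_B (hk)⁽²⁾ = k⁽¹⁾ h⁽¹⁾ ⊗_B h⁽²⁾ k⁽²⁾, i.e. τ is an anti-algebra-type cocycle: τ(hk) = k⁽¹⁾h⁽¹⁾ ⊗_B h⁽²⁾k⁽²⁾. -/
open TensorProduct

noncomputable section

variable {k A H : Type*} [Field k] [Ring A] [Algebra k A]
  [Ring H] [HopfAlgebra k H]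

/-- The set of coinvariant elements of `A` for the coaction `δ`. -/
def coinv (δ : A →ₐ[k] A ⊗[k] H) : Set A := {a | δ a = a ⊗ₜ[k] 1}

/-- The submodule of `A ⊗[k] A` generated by the `B`-balancing relations, where
`B = coinv δ` is the subalgebra of coinvariants. -/
def relSub (δ : A →ₐ[k] A ⊗[k] H) : Submodule k (A ⊗[k] A) :=
  Submodule.span k
    {z | ∃ x y b, b ∈ coinv δ ∧ z = (x * b) ⊗ₜ[k] y - x ⊗ₜ[k] (b * y)}

/-- The balanced tensor product `A ⊗_B A` over the coinvariant subalgebra. -/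
abbrev QB (δ : A →ₐ[k] A ⊗[k] H) := (A ⊗[k] A) ⧸ relSub δ

/-- The canonical Galois map `A ⊗ A → A ⊗ H`, `a' ⊗ a ↦ a' a₍₀₎ ⊗ a₍₁₎`,
before descending to `A ⊗_B A`. -/
def canMap (δ : A →ₐ[k] A ⊗[k] H) : A ⊗[k] A →ₗ[k] A ⊗[k] H :=
  (LinearMap.rTensor H (LinearMap.mul' k A)) ∘ₗ
    ((TensorProduct.assoc k A A H).symm.toLinearMap) ∘ₗ
      (LinearMap.lTensor A δ.toLinearMap)

/-- `δ` is a counital and coassociative coaction (so `A` is an `H`-comodule algebra). -/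
def IsCoaction (δ : A →ₐ[k] A ⊗[k] H) : Prop :=
  (∀ a : A,
    (TensorProduct.rid k A)
      ((LinearMap.lTensor A (Coalgebra.counit (R := k) (A := H))) (δ a)) = a) ∧
  (∀ a : A,
    (TensorProduct.assoc k A H H)
      ((LinearMap.rTensor H δ.toLinearMap) (δ a)) =
    (LinearMap.lTensor A (Coalgebra.comul (R := k) (A := H))) (δ a))

/-- The translation map `τ = χ⁻¹(1 ⊗ -) : H → A ⊗_B A`. -/
def tauMap (δ : A →ₐ[k] A ⊗[k] H) (χ : QB δ ≃ₗ[k] A ⊗[k] H) :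
    H →ₗ[k] QB δ :=
  χ.symm.toLinearMap ∘ₗ (TensorProduct.mk k A H 1)


lemma aux1 (δ : A →ₐ[k] A ⊗[k] H) (a b : A) :
    canMap δ (a ⊗ₜ[k] b) = (a ⊗ₜ[k] (1:H)) * δ b := by
  have key : ∀ w : A ⊗[k] H,
      (LinearMap.rTensor H (LinearMap.mul' k A))
        ((TensorProduct.assoc k A A H).symm (a ⊗ₜ[k] w)) = (a ⊗ₜ[k] (1:H)) * w := by
    intro w
    induction w using TensorProduct.induction_on with
    | zero => rw [tmul_zero, LinearEquiv.map_zero, LinearMap.map_zero, mul_zero]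
    | tmul x y => simp [Algebra.TensorProduct.tmul_mul_tmul, LinearMap.mul'_apply]
    | add x y hx hy => simp [tmul_add, hx, hy, mul_add]
  simpa [canMap] using key (δ b)

def bil (δ : A →ₐ[k] A ⊗[k] H) :
    A →ₗ[k] A →ₗ[k] (A ⊗[k] H →ₗ[k] A ⊗[k] H) :=
  LinearMap.mk₂ k
    (fun u v => LinearMap.mulRight k (δ v) ∘ₗ LinearMap.mulLeft k (u ⊗ₜ[k] (1:H)))
    (fun u₁ u₂ v => by ext z; simp [add_tmul, add_mul])
    (fun c u v => by ext z; simp [smul_mul_assoc, ← TensorProduct.smul_tmul'])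
    (fun u v₁ v₂ => by ext z; simp [mul_add])
    (fun c u v => by ext z; simp [mul_smul_comm])

lemma bil_apply (δ : A →ₐ[k] A ⊗[k] H) (u v : A) (z : A ⊗[k] H) :
    bil δ u v z = (u ⊗ₜ[k] (1:H)) * z * δ v := by
  simp [bil]

lemma auxB (δ : A →ₐ[k] A ⊗[k] H)
    (mo : A ⊗[k] A →ₗ[k] A ⊗[k] A →ₗ[k] A ⊗[k] A)
    (hmo : ∀ u v x y : A, mo (u ⊗ₜ[k] v) (x ⊗ₜ[k] y) = (u * x) ⊗ₜ[k] (y * v))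
    (Tk Th : A ⊗[k] A) :
    canMap δ (mo Tk Th) = TensorProduct.lift (bil δ) Tk (canMap δ Th) := by
  induction Tk using TensorProduct.induction_on with
  | zero => simp
  | add x y hx hy => simp [hx, hy]
  | tmul u v =>
    induction Th using TensorProduct.induction_on with
    | zero => simp
    | add x y hx hy => simp [map_add, hx, hy]
    | tmul x y =>
      rw [hmo, aux1, aux1]
      simp only [lift.tmul, bil_apply, map_mul]
      have e : ((u * x) ⊗ₜ[k] (1:H)) = (u ⊗ₜ[k] (1:H)) * (x ⊗ₜ[k] (1:H)) := by
        rw [Algebra.TensorProduct.tmul_mul_tmul, mul_one]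
      rw [e]; simp only [mul_assoc]

lemma auxC (δ : A →ₐ[k] A ⊗[k] H) (h : H) (z : A ⊗[k] A) :
    TensorProduct.lift (bil δ) z ((1:A) ⊗ₜ[k] h) = ((1:A) ⊗ₜ[k] h) * canMap δ z := by
  induction z using TensorProduct.induction_on with
  | zero => simp
  | add x y hx hy => simp [hx, hy, mul_add]
  | tmul u v =>
    rw [aux1, lift.tmul, bil_apply]
    have e : (u ⊗ₜ[k] (1:H)) * ((1:A) ⊗ₜ[k] h) = ((1:A) ⊗ₜ[k] h) * (u ⊗ₜ[k] (1:H)) := by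
      rw [Algebra.TensorProduct.tmul_mul_tmul, Algebra.TensorProduct.tmul_mul_tmul]
      simp
    rw [mul_assoc, ← mul_assoc (u ⊗ₜ[k] (1:H)), e, mul_assoc]

/-- the translation map satisfies
`τ(hk) = k⁽¹⁾h⁽¹⁾ ⊗_B h⁽²⁾k⁽²⁾`.  Here `mo` is the multiplication of
`A ⊗ A^op` (characterized by `hmo`), and `Th`, `Tk` are arbitrary representatives
in `A ⊗ A` of the translation map values `τ(h)`, `τ(k)`. -/
theorem translation_map_antimultiplicative
    (δ : A →ₐ[k] A ⊗[k] H) (hδ : IsCoaction δ)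
    (χ : QB δ ≃ₗ[k] A ⊗[k] H)
    (hχ : ∀ z : A ⊗[k] A, χ (Submodule.Quotient.mk z) = canMap δ z)
    (mo : A ⊗[k] A →ₗ[k] A ⊗[k] A →ₗ[k] A ⊗[k] A)
    (hmo : ∀ u v x y : A, mo (u ⊗ₜ[k] v) (x ⊗ₜ[k] y) = (u * x) ⊗ₜ[k] (y * v))
    (h kk : H) (Th Tk : A ⊗[k] A)
    (hTh : (Submodule.Quotient.mk Th : QB δ) = tauMap δ χ h)
    (hTk : (Submodule.Quotient.mk Tk : QB δ) = tauMap δ χ kk) :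
    tauMap δ χ (h * kk) = Submodule.Quotient.mk (mo Tk Th) := by
  have hh : canMap δ Th = (1:A) ⊗ₜ[k] h := by
    have e := hχ Th
    rw [hTh] at e
    simpa [tauMap] using e.symm
  have hk2 : canMap δ Tk = (1:A) ⊗ₜ[k] kk := by
    have e := hχ Tk
    rw [hTk] at e
    simpa [tauMap] using e.symm
  apply χ.injective
  rw [hχ, auxB δ mo hmo, hh, auxC, hk2]
  simp [tauMap, Algebra.TensorProduct.tmul_mul_tmul]

end
end

section
/- Let B = A^{coH} ⊆ A be a faithfully flat Hopf–Galois extension. The set Aut_H(A) of unital algebra endomorphisms F of A that are right H-comodule maps and restrict to the identity on B is a group under composition; moreover the inverse of F is given by F⁻¹(a) = a₍₀₎ F(a₍₁₎⁽¹⁾) a₍₁₎⁽²⁾. -/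
open TensorProduct

noncomputable section

variable {k A H : Type*} [Field k] [Ring A] [Algebra k A]
  [Ring H] [HopfAlgebra k H]

/-- The `B`-balancing relations in `A ⊗[k] M`, for a left action `ρ` of the
coinvariant subalgebra on a `k`-module `M`. -/
def relSubM (δ : A →ₐ[k] A ⊗[k] H) (M : Type*) [AddCommGroup M] [Module k M]
    (ρ : A → M →ₗ[k] M) : Submodule k (A ⊗[k] M) :=
  Submodule.span k
    {z | ∃ x m b, b ∈ coinv δ ∧ z = (x * b) ⊗ₜ[k] m - x ⊗ₜ[k] (ρ b m)}

/-- `A` is faithfully flat as a right module over the coinvariant subalgebra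
`B = coinv δ`:  a map `f` of left `B`-modules is injective if and only if
`id_A ⊗_B f` is injective. -/
def FaithfullyFlatCoinv (δ : A →ₐ[k] A ⊗[k] H) : Prop :=
  ∀ (M N : Type) [AddCommGroup M] [Module k M] [AddCommGroup N] [Module k N]
    (ρM : A → M →ₗ[k] M) (ρN : A → N →ₗ[k] N) (f : M →ₗ[k] N)
    (hf : ∀ b ∈ coinv δ, ∀ m, f (ρM b m) = ρN b (f m)),
    Function.Injective f ↔
      Function.Injective (Submodule.mapQ (relSubM δ M ρM) (relSubM δ N ρN)
        (LinearMap.lTensor A f) (by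
          rw [relSubM, Submodule.span_le]
          rintro z ⟨x, m, b, hb, rfl⟩
          simp only [SetLike.mem_coe, Submodule.mem_comap, map_sub,
            LinearMap.lTensor_tmul]
          rw [hf b hb m]
          exact Submodule.subset_span ⟨x, f m, b, hb, rfl⟩))

/-- `F` is a gauge transformation: a unital algebra endomorphism of `A` that is
`H`-equivariant and restricts to the identity on the coinvariant subalgebra. -/
def IsGauge (δ : A →ₐ[k] A ⊗[k] H) (F : A →ₐ[k] A) : Prop :=
  (∀ a : A, δ (F a) = (LinearMap.rTensor H F.toLinearMap) (δ a)) ∧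
  (∀ b ∈ coinv δ, F b = b)


/-!
Write `τ(h) = h⁽¹⁾ ⊗_B h⁽²⁾` for the translation map and `f = Φ_F ∘ τ`, so that the proposed
inverse is `twist δ f : a ↦ a₍₀₎ f(a₍₁₎)`. Since `χ` is left `A`-linear and
`χ⁻¹(δ a) = 1 ⊗_B a`, every `Ψ : A ⊗_B A → A` with `Ψ(x' x ⊗ y) = G(x') Ψ(x ⊗ y)` satisfies
`Ψ(1 ⊗_B a) = G(a₍₀₎) Ψ(τ(a₍₁₎))`. For `Ψ = Φ_F` this is `F⁻¹(F a) = a`; for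
`Ψ(x ⊗ y) = x F(y)` it is `F = twist δ g` with `g = Ψ ∘ τ`.

For the other composite one works in convolution algebras. The coactions on the two legs of
`A ⊗_B A` evaluated on the translation map are `τ(h)⁽¹⁾ ⊗ τ(h)⁽²⁾₍₀₎ ⊗ τ(h)⁽²⁾₍₁₎ = τ(h₁) ⊗ h₂`
and `τ(h)⁽¹⁾₍₀₎ ⊗ τ(h)⁽²⁾ ⊗ τ(h)⁽¹⁾₍₁₎ = τ(h₂) ⊗ S(h₁)`, the latter because
`h ↦ τ(h)⁽¹⁾₍₀₎ τ(h)⁽²⁾ ⊗ τ(h)⁽¹⁾₍₁₎` and `h ↦ 1 ⊗ S(h)` are a left and a right convolution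
inverse of `h ↦ 1 ⊗ h`. Together they give `(1 ⊗ h₁) δ(f(h₂)) = f(h₁) ⊗ h₂`, which makes
`twist δ f` colinear, and `f * g = ε`. Colinearity turns `twist δ g ∘ twist δ f` into
`twist δ (f * g) = id`, that is `F ∘ F⁻¹ = id`, and multiplicativity of `F⁻¹` follows from the
injectivity of `F`.
-/

open WithConv

namespace QB

variable (δ : A →ₐ[k] A ⊗[k] H)

theorem mk_mul_tmul {b : A} (hb : b ∈ coinv δ) (x y : A) :
    (Submodule.Quotient.mk ((x * b) ⊗ₜ[k] y) : QB δ) =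
      Submodule.Quotient.mk (x ⊗ₜ[k] (b * y)) :=
  (Submodule.Quotient.eq _).2 (Submodule.subset_span ⟨x, y, b, hb, rfl⟩)

variable {δ} in
theorem hom_ext {N : Type*} [AddCommGroup N] [Module k N] {f g : QB δ →ₗ[k] N}
    (h : ∀ x y : A, f (Submodule.Quotient.mk (x ⊗ₜ[k] y)) =
      g (Submodule.Quotient.mk (x ⊗ₜ[k] y))) : f = g :=
  Submodule.linearMap_qext _ (TensorProduct.ext' h)

def lift {N : Type*} [AddCommGroup N] [Module k N] (f : A ⊗[k] A →ₗ[k] N)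
    (hf : ∀ x y b : A, b ∈ coinv δ → f ((x * b) ⊗ₜ[k] y) = f (x ⊗ₜ[k] (b * y))) :
    QB δ →ₗ[k] N :=
  (relSub δ).liftQ f <| (Submodule.span_le).2 <| by
    rintro _ ⟨x, y, b, hb, rfl⟩
    simp [hf x y b hb]

def mul : QB δ →ₗ[k] A :=
  lift δ (LinearMap.mul' k A) fun x y b _ => by simp [mul_assoc]

@[simp]
theorem mul_mk (x y : A) : mul δ (Submodule.Quotient.mk (x ⊗ₜ[k] y)) = x * y := rfl

def mulLeft (a : A) : QB δ →ₗ[k] QB δ :=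
  lift δ ((relSub δ).mkQ ∘ₗ (LinearMap.mulLeft k a).rTensor A) fun x y b hb => by
    simpa [mul_assoc] using mk_mul_tmul δ hb (a * x) y

@[simp]
theorem mulLeft_mk (a x y : A) :
    mulLeft δ a (Submodule.Quotient.mk (x ⊗ₜ[k] y)) = Submodule.Quotient.mk ((a * x) ⊗ₜ[k] y) :=
  rfl

def coactRight : QB δ →ₗ[k] QB δ ⊗[k] H :=
  lift δ ((relSub δ).mkQ.rTensor H ∘ₗ (TensorProduct.assoc k A A H).symm.toLinearMap ∘ₗ
      δ.toLinearMap.lTensor A) fun x y b hb => by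
    have hδ : δ (b * y) = (b ⊗ₜ[k] 1) * δ y := by
      rw [map_mul, show δ b = b ⊗ₜ[k] 1 from hb]
    simp only [LinearMap.comp_apply, LinearMap.lTensor_tmul, AlgHom.toLinearMap_apply, hδ]
    induction δ y using TensorProduct.induction_on with
    | zero => simp
    | tmul c h => simp [mk_mul_tmul δ hb]
    | add t₁ t₂ h₁ h₂ => simp only [mul_add, tmul_add, map_add, h₁, h₂]

@[simp]
theorem coactRight_mk (x y : A) :
    coactRight δ (Submodule.Quotient.mk (x ⊗ₜ[k] y)) =
      (relSub δ).mkQ.rTensor H ((TensorProduct.assoc k A A H).symm (x ⊗ₜ[k] δ y)) := rfl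

def coactLeft : QB δ →ₗ[k] QB δ ⊗[k] H :=
  lift δ ((relSub δ).mkQ.rTensor H ∘ₗ (TensorProduct.rightComm k A H A).toLinearMap ∘ₗ
      δ.toLinearMap.rTensor A) fun x y b hb => by
    have hδ : δ (x * b) = δ x * (b ⊗ₜ[k] 1) := by
      rw [map_mul, show δ b = b ⊗ₜ[k] 1 from hb]
    simp only [LinearMap.comp_apply, LinearMap.rTensor_tmul, AlgHom.toLinearMap_apply, hδ]
    induction δ x using TensorProduct.induction_on with
    | zero => simp
    | tmul c h => simp [mk_mul_tmul δ hb]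
    | add t₁ t₂ h₁ h₂ => simp only [add_mul, add_tmul, map_add, h₁, h₂]

@[simp]
theorem coactLeft_mk (x y : A) :
    coactLeft δ (Submodule.Quotient.mk (x ⊗ₜ[k] y)) =
      (relSub δ).mkQ.rTensor H (TensorProduct.rightComm k A H A (δ x ⊗ₜ[k] y)) := rfl

def mulMapRight (F : A →ₐ[k] A) (hF : ∀ b ∈ coinv δ, F b = b) : QB δ →ₗ[k] A :=
  lift δ (LinearMap.mul' k A ∘ₗ F.toLinearMap.lTensor A) fun x y b hb => by
    simp [hF b hb, mul_assoc]

@[simp]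
theorem mulMapRight_mk (F : A →ₐ[k] A) (hF : ∀ b ∈ coinv δ, F b = b) (x y : A) :
    mulMapRight δ F hF (Submodule.Quotient.mk (x ⊗ₜ[k] y)) = x * F y := rfl

end QB

namespace HopfGalois

local notation "ι₁" =>
  AlgHom.toLinearMap (Algebra.TensorProduct.includeLeft : A →ₐ[k] A ⊗[k] H)
local notation "ι₂" =>
  AlgHom.toLinearMap (Algebra.TensorProduct.includeRight : H →ₐ[k] A ⊗[k] H)

variable {δ : A →ₐ[k] A ⊗[k] H} {χ : QB δ ≃ₗ[k] A ⊗[k] H}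

theorem canMap_tmul (x y : A) : canMap δ (x ⊗ₜ[k] y) = (x ⊗ₜ[k] 1) * δ y := by
  simp only [canMap, LinearMap.comp_apply, LinearMap.lTensor_tmul, LinearEquiv.coe_coe,
    AlgHom.toLinearMap_apply]
  induction δ y using TensorProduct.induction_on with
  | zero => simp
  | tmul c h => simp
  | add t₁ t₂ h₁ h₂ => simp only [tmul_add, map_add, mul_add, h₁, h₂]

theorem chi_mulLeft (hχ : ∀ z : A ⊗[k] A, χ (Submodule.Quotient.mk z) = canMap δ z) (a : A)
    (q : QB δ) : χ (QB.mulLeft δ a q) = (a ⊗ₜ[k] 1) * χ q := by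
  change (χ.toLinearMap ∘ₗ QB.mulLeft δ a) q =
    (LinearMap.mulLeft k (a ⊗ₜ[k] (1 : H)) ∘ₗ χ.toLinearMap) q
  congr 1
  refine QB.hom_ext fun x y => ?_
  simp [hχ, canMap_tmul, ← mul_assoc]

theorem chi_tauMap (h : H) : χ (tauMap δ χ h) = 1 ⊗ₜ[k] h := by
  simp [tauMap]

theorem chi_symm_tmul (hχ : ∀ z : A ⊗[k] A, χ (Submodule.Quotient.mk z) = canMap δ z)
    (a : A) (h : H) : χ.symm (a ⊗ₜ[k] h) = QB.mulLeft δ a (tauMap δ χ h) := by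
  rw [LinearEquiv.symm_apply_eq, chi_mulLeft hχ, chi_tauMap]
  simp

theorem chi_symm_delta (hχ : ∀ z : A ⊗[k] A, χ (Submodule.Quotient.mk z) = canMap δ z)
    (a : A) : χ.symm (δ a) = Submodule.Quotient.mk (1 ⊗ₜ[k] a) := by
  rw [LinearEquiv.symm_apply_eq, hχ, canMap_tmul, ← Algebra.TensorProduct.one_def, one_mul]

theorem rid_lTensor_counit_mul (hδ : IsCoaction δ) (x y : A) :
    TensorProduct.rid k A (Coalgebra.counit.lTensor A ((x ⊗ₜ[k] 1) * δ y)) = x * y := by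
  conv_rhs => rw [← hδ.1 y]
  induction δ y using TensorProduct.induction_on with
  | zero => simp
  | tmul c h => simp
  | add t₁ t₂ h₁ h₂ => simp only [mul_add, map_add, h₁, h₂]

theorem mul_tauMap (hχ : ∀ z : A ⊗[k] A, χ (Submodule.Quotient.mk z) = canMap δ z)
    (hδ : IsCoaction δ) (h : H) :
    QB.mul δ (tauMap δ χ h) = Coalgebra.counit (R := k) h • (1 : A) := by
  have : QB.mul δ = (TensorProduct.rid k A).toLinearMap ∘ₗ
      Coalgebra.counit.lTensor A ∘ₗ χ.toLinearMap := by
    ext x y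
    simp [hχ, canMap_tmul, rid_lTensor_counit_mul hδ]
  rw [this]
  simp [chi_tauMap]

theorem rTensor_delta_delta (hδ : IsCoaction δ) (a : A) :
    δ.toLinearMap.rTensor H (δ a) =
      (TensorProduct.assoc k A H H).symm (Coalgebra.comul.lTensor A (δ a)) := by
  rw [← hδ.2 a, LinearEquiv.symm_apply_apply]

theorem rTensor_chi_coactRight
    (hχ : ∀ z : A ⊗[k] A, χ (Submodule.Quotient.mk z) = canMap δ z) (hδ : IsCoaction δ)
    (q : QB δ) :
    χ.toLinearMap.rTensor H (QB.coactRight δ q) =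
      (TensorProduct.assoc k A H H).symm (Coalgebra.comul.lTensor A (χ q)) := by
  change (χ.toLinearMap.rTensor H ∘ₗ QB.coactRight δ) q =
    ((TensorProduct.assoc k A H H).symm.toLinearMap ∘ₗ Coalgebra.comul.lTensor A ∘ₗ
      χ.toLinearMap) q
  congr 1
  refine QB.hom_ext fun x y => ?_
  have hL : ∀ t : A ⊗[k] H,
      χ.toLinearMap.rTensor H ((relSub δ).mkQ.rTensor H
        ((TensorProduct.assoc k A A H).symm (x ⊗ₜ[k] t))) =
      (LinearMap.mulLeft k (x ⊗ₜ[k] (1 : H))).rTensor H (δ.toLinearMap.rTensor H t) := by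
    intro t
    induction t using TensorProduct.induction_on with
    | zero => simp
    | tmul c h => simp [hχ, canMap_tmul]
    | add t₁ t₂ h₁ h₂ => simp only [tmul_add, map_add, h₁, h₂]
  have hR : ∀ t : A ⊗[k] H,
      (TensorProduct.assoc k A H H).symm (Coalgebra.comul.lTensor A ((x ⊗ₜ[k] 1) * t)) =
      (LinearMap.mulLeft k (x ⊗ₜ[k] (1 : H))).rTensor H
        ((TensorProduct.assoc k A H H).symm (Coalgebra.comul.lTensor A t)) := by
    intro t
    induction t using TensorProduct.induction_on with
    | zero => simp
    | tmul c h =>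
      simp only [Algebra.TensorProduct.tmul_mul_tmul, one_mul, LinearMap.lTensor_tmul]
      induction Coalgebra.comul (R := k) h using TensorProduct.induction_on with
      | zero => simp
      | tmul g g' => simp
      | add w₁ w₂ h₁ h₂ => simp only [tmul_add, map_add, h₁, h₂]
    | add t₁ t₂ h₁ h₂ => simp only [mul_add, map_add, h₁, h₂]
  simp [hχ, canMap_tmul, hL, hR, rTensor_delta_delta hδ]

theorem coactRight_tauMap
    (hχ : ∀ z : A ⊗[k] A, χ (Submodule.Quotient.mk z) = canMap δ z) (hδ : IsCoaction δ)
    (h : H) :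
    QB.coactRight δ (tauMap δ χ h) = (tauMap δ χ).rTensor H (Coalgebra.comul h) := by
  apply (χ.rTensor H).injective
  change χ.toLinearMap.rTensor H _ = χ.toLinearMap.rTensor H _
  rw [rTensor_chi_coactRight hχ hδ, chi_tauMap, LinearMap.lTensor_tmul,
    ← LinearMap.comp_apply, ← LinearMap.rTensor_comp]
  induction Coalgebra.comul (R := k) h using TensorProduct.induction_on with
  | zero => simp
  | tmul g g' => simp [chi_tauMap]
  | add w₁ w₂ h₁ h₂ => simp only [tmul_add, map_add, h₁, h₂]

theorem includeRight_convMul_antipode :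
    toConv ι₂ * toConv (ι₂ ∘ₗ HopfAlgebra.antipode k) =
      (1 : WithConv (H →ₗ[k] A ⊗[k] H)) := by
  calc toConv ι₂ * toConv (ι₂ ∘ₗ HopfAlgebra.antipode k)
      = toConv (ι₂ ∘ₗ (toConv (LinearMap.id : H →ₗ[k] H) *
          toConv (HopfAlgebra.antipode k)).ofConv) := by
        rw [LinearMap.algHom_comp_convMul_distrib]; rfl
    _ = 1 := by
        rw [LinearMap.id_mul_antipode]
        ext h
        simp [Algebra.algebraMap_eq_smul_one, Algebra.TensorProduct.one_def]

section Gauge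

variable {F : A →ₐ[k] A} {Φ : QB δ →ₗ[k] A}

theorem rTensor_coactLeft_mk
    (hΦ : ∀ x y : A, Φ (Submodule.Quotient.mk (x ⊗ₜ[k] y)) = F x * y) (x y : A) :
    Φ.rTensor H (QB.coactLeft δ (Submodule.Quotient.mk (x ⊗ₜ[k] y))) =
      F.toLinearMap.rTensor H (δ x) * (y ⊗ₜ[k] 1) := by
  rw [QB.coactLeft_mk]
  induction δ x using TensorProduct.induction_on with
  | zero => simp
  | tmul a g => simp [hΦ]
  | add s₁ s₂ h₁ h₂ => simp only [add_tmul, map_add, add_mul, h₁, h₂]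

theorem mul'_map_coactRight (hF : ∀ a : A, δ (F a) = F.toLinearMap.rTensor H (δ a))
    (hΦ : ∀ x y : A, Φ (Submodule.Quotient.mk (x ⊗ₜ[k] y)) = F x * y) (q : QB δ) :
    LinearMap.mul' k (A ⊗[k] H) (TensorProduct.map (Φ.rTensor H ∘ₗ QB.coactLeft δ) ι₂
      (QB.coactRight δ q)) = δ (Φ q) := by
  change (LinearMap.mul' k (A ⊗[k] H) ∘ₗ
    TensorProduct.map (Φ.rTensor H ∘ₗ QB.coactLeft δ) ι₂ ∘ₗ QB.coactRight δ) q =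
      (δ.toLinearMap ∘ₗ Φ) q
  congr 1
  refine QB.hom_ext fun x y => ?_
  simp only [LinearMap.comp_apply, QB.coactRight_mk, AlgHom.toLinearMap_apply, hΦ, map_mul, hF]
  induction δ y using TensorProduct.induction_on with
  | zero => simp
  | tmul c h =>
    simp only [TensorProduct.assoc_symm_tmul, LinearMap.rTensor_tmul, Submodule.mkQ_apply,
      map_tmul, LinearMap.comp_apply, LinearMap.mul'_apply, rTensor_coactLeft_mk hΦ,
      AlgHom.toLinearMap_apply, Algebra.TensorProduct.includeRight_apply, mul_assoc,
      Algebra.TensorProduct.tmul_mul_tmul, one_mul, mul_one]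
  | add t₁ t₂ h₁ h₂ => simp only [tmul_add, map_add, mul_add, h₁, h₂]

theorem delta_comp_eq_convMul
    (hχ : ∀ z : A ⊗[k] A, χ (Submodule.Quotient.mk z) = canMap δ z) (hδ : IsCoaction δ)
    (hF : ∀ a : A, δ (F a) = F.toLinearMap.rTensor H (δ a))
    (hΦ : ∀ x y : A, Φ (Submodule.Quotient.mk (x ⊗ₜ[k] y)) = F x * y) :
    toConv (δ.toLinearMap ∘ₗ Φ ∘ₗ tauMap δ χ) =
      toConv (Φ.rTensor H ∘ₗ QB.coactLeft δ ∘ₗ tauMap δ χ) * toConv ι₂ := by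
  ext h
  have := mul'_map_coactRight hF hΦ (tauMap δ χ h)
  rw [coactRight_tauMap hχ hδ, LinearMap.map_rTensor] at this
  exact this.symm

end Gauge

theorem rTensor_mul_coactLeft_tauMap
    (hχ : ∀ z : A ⊗[k] A, χ (Submodule.Quotient.mk z) = canMap δ z) (hδ : IsCoaction δ) :
    (QB.mul δ).rTensor H ∘ₗ QB.coactLeft δ ∘ₗ tauMap δ χ = ι₂ ∘ₗ HopfAlgebra.antipode k := by
  have hV := delta_comp_eq_convMul (F := AlgHom.id k A) (Φ := QB.mul δ) hχ hδ
    (fun a => by simp) (fun x y => rfl)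
  have h1 : toConv (δ.toLinearMap ∘ₗ QB.mul δ ∘ₗ tauMap δ χ) = 1 := by
    ext h
    simp [mul_tauMap hχ hδ, Algebra.algebraMap_eq_smul_one, Algebra.TensorProduct.one_def]
  exact congrArg ofConv
    (left_inv_eq_right_inv (hV.symm.trans h1) includeRight_convMul_antipode)

theorem rTensor_chi_coactLeft
    (hχ : ∀ z : A ⊗[k] A, χ (Submodule.Quotient.mk z) = canMap δ z) (q : QB δ) :
    χ.toLinearMap.rTensor H (QB.coactLeft δ q) =
      TensorProduct.rightComm k A H H
        (((QB.mul δ).rTensor H ∘ₗ QB.coactLeft δ).rTensor H (QB.coactRight δ q)) := by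
  change (χ.toLinearMap.rTensor H ∘ₗ QB.coactLeft δ) q =
    ((TensorProduct.rightComm k A H H).toLinearMap ∘ₗ
      ((QB.mul δ).rTensor H ∘ₗ QB.coactLeft δ).rTensor H ∘ₗ QB.coactRight δ) q
  congr 1
  refine QB.hom_ext fun x y => ?_
  have hL : ∀ s : A ⊗[k] H,
      χ.toLinearMap.rTensor H
          ((relSub δ).mkQ.rTensor H (TensorProduct.rightComm k A H A (s ⊗ₜ y))) =
        TensorProduct.rightComm k A H H (s ⊗ₜ 1) * (δ y ⊗ₜ 1) := by
    intro s
    induction s using TensorProduct.induction_on with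
    | zero => simp
    | tmul a g => simp [hχ, canMap_tmul]
    | add s₁ s₂ h₁ h₂ => simp only [add_tmul, map_add, add_mul, h₁, h₂]
  have hR : ∀ t : A ⊗[k] H,
      TensorProduct.rightComm k A H H (((QB.mul δ).rTensor H ∘ₗ QB.coactLeft δ).rTensor H
        ((relSub δ).mkQ.rTensor H ((TensorProduct.assoc k A A H).symm (x ⊗ₜ t)))) =
        TensorProduct.rightComm k A H H (δ x ⊗ₜ 1) * (t ⊗ₜ 1) := by
    intro t
    induction t using TensorProduct.induction_on with
    | zero => simp
    | tmul c h =>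
      simp only [TensorProduct.assoc_symm_tmul, LinearMap.rTensor_tmul, Submodule.mkQ_apply,
        LinearMap.comp_apply, AlgHom.toLinearMap_id, LinearMap.rTensor_id, LinearMap.id_apply,
        rTensor_coactLeft_mk (F := AlgHom.id k A) (Φ := QB.mul δ) (fun _ _ => rfl)]
      induction δ x using TensorProduct.induction_on with
      | zero => simp
      | tmul a g => simp
      | add s₁ s₂ h₁ h₂ => simp only [add_mul, add_tmul, map_add, h₁, h₂]
    | add t₁ t₂ h₁ h₂ => simp only [tmul_add, add_tmul, map_add, mul_add, h₁, h₂]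
  simp only [LinearMap.comp_apply, QB.coactLeft_mk, QB.coactRight_mk, LinearEquiv.coe_coe,
    hL, hR]

theorem coactLeft_tauMap
    (hχ : ∀ z : A ⊗[k] A, χ (Submodule.Quotient.mk z) = canMap δ z) (hδ : IsCoaction δ)
    (h : H) :
    QB.coactLeft δ (tauMap δ χ h) =
      TensorProduct.map (tauMap δ χ) (HopfAlgebra.antipode k)
        (TensorProduct.comm k H H (Coalgebra.comul h)) := by
  apply (χ.rTensor H).injective
  change χ.toLinearMap.rTensor H _ = χ.toLinearMap.rTensor H _
  rw [rTensor_chi_coactLeft hχ, coactRight_tauMap hχ hδ,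
    ← LinearMap.comp_apply _ (LinearMap.rTensor H _), ← LinearMap.rTensor_comp,
    LinearMap.comp_assoc, rTensor_mul_coactLeft_tauMap hχ hδ]
  induction Coalgebra.comul (R := k) h using TensorProduct.induction_on with
  | zero => simp
  | tmul g g' => simp [chi_tauMap]
  | add w₁ w₂ h₁ h₂ => simp only [map_add, h₁, h₂]

theorem rTensor_coactLeft_tauMap
    (hχ : ∀ z : A ⊗[k] A, χ (Submodule.Quotient.mk z) = canMap δ z) (hδ : IsCoaction δ)
    (Φ : QB δ →ₗ[k] A) :
    toConv (Φ.rTensor H ∘ₗ QB.coactLeft δ ∘ₗ tauMap δ χ) =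
      toConv (ι₂ ∘ₗ HopfAlgebra.antipode k) * toConv (ι₁ ∘ₗ Φ ∘ₗ tauMap δ χ) := by
  ext h
  simp only [LinearMap.convMul_apply, LinearMap.comp_apply, coactLeft_tauMap hχ hδ]
  induction Coalgebra.comul (R := k) h using TensorProduct.induction_on with
  | zero => simp
  | tmul g g' => simp
  | add w₁ w₂ h₁ h₂ => simp only [map_add, h₁, h₂]

theorem includeRight_convMul_delta_comp
    (hχ : ∀ z : A ⊗[k] A, χ (Submodule.Quotient.mk z) = canMap δ z) (hδ : IsCoaction δ)
    {F : A →ₐ[k] A} {Φ : QB δ →ₗ[k] A}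
    (hF : ∀ a : A, δ (F a) = F.toLinearMap.rTensor H (δ a))
    (hΦ : ∀ x y : A, Φ (Submodule.Quotient.mk (x ⊗ₜ[k] y)) = F x * y) :
    toConv ι₂ * toConv (δ.toLinearMap ∘ₗ Φ ∘ₗ tauMap δ χ) =
      toConv (ι₁ ∘ₗ Φ ∘ₗ tauMap δ χ) * toConv ι₂ := by
  rw [delta_comp_eq_convMul hχ hδ hF hΦ, rTensor_coactLeft_tauMap hχ hδ, ← mul_assoc,
    ← mul_assoc, includeRight_convMul_antipode, one_mul]

variable (δ) in
def twist (f : H →ₗ[k] A) : A →ₗ[k] A :=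
  LinearMap.mul' k A ∘ₗ f.lTensor A ∘ₗ δ.toLinearMap

theorem twist_apply (f : H →ₗ[k] A) (a : A) :
    twist δ f a = LinearMap.mul' k A (f.lTensor A (δ a)) := rfl

theorem twist_one (hδ : IsCoaction δ) :
    twist δ (1 : WithConv (H →ₗ[k] A)).ofConv = LinearMap.id := by
  ext a
  conv_rhs => rw [LinearMap.id_apply, ← hδ.1 a]
  rw [twist_apply]
  induction δ a using TensorProduct.induction_on with
  | zero => simp
  | tmul a' h => simp [Algebra.algebraMap_eq_smul_one]
  | add t₁ t₂ h₁ h₂ => simp only [map_add, h₁, h₂]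

theorem delta_twist (hδ : IsCoaction δ) {f : H →ₗ[k] A}
    (hf : toConv ι₂ * toConv (δ.toLinearMap ∘ₗ f) = toConv (ι₁ ∘ₗ f) * toConv ι₂) (a : A) :
    δ (twist δ f a) = (twist δ f).rTensor H (δ a) := by
  have hL (t : A ⊗[k] A) : δ (LinearMap.mul' k A t) =
      LinearMap.mul' k (A ⊗[k] H) (TensorProduct.map δ.toLinearMap δ.toLinearMap t) :=
    LinearMap.congr_fun (AlgHom.comp_mul' δ) t
  have hX : LinearMap.mul' k (A ⊗[k] H) ∘ₗ (δ.toLinearMap ∘ₗ f).lTensor (A ⊗[k] H) ∘ₗ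
      (TensorProduct.assoc k A H H).symm.toLinearMap ∘ₗ Coalgebra.comul.lTensor A =
      LinearMap.mul' k (A ⊗[k] H) ∘ₗ
        TensorProduct.map ι₁ (toConv ι₂ * toConv (δ.toLinearMap ∘ₗ f)).ofConv := by
    refine TensorProduct.ext' fun a' h => ?_
    simp only [LinearMap.comp_apply, LinearMap.lTensor_tmul, LinearEquiv.coe_coe, map_tmul,
      LinearMap.convMul_apply, LinearMap.mul'_apply]
    induction Coalgebra.comul (R := k) h using TensorProduct.induction_on with
    | zero => simp
    | tmul g g' => simp [← mul_assoc]
    | add w₁ w₂ h₁ h₂ => simp only [tmul_add, map_add, mul_add, h₁, h₂]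
  have hY : (LinearMap.mul' k A ∘ₗ f.lTensor A).rTensor H ∘ₗ
      (TensorProduct.assoc k A H H).symm.toLinearMap ∘ₗ Coalgebra.comul.lTensor A =
      LinearMap.mul' k (A ⊗[k] H) ∘ₗ
        TensorProduct.map ι₁ (toConv (ι₁ ∘ₗ f) * toConv ι₂).ofConv := by
    refine TensorProduct.ext' fun a' h => ?_
    simp only [LinearMap.comp_apply, LinearMap.lTensor_tmul, LinearEquiv.coe_coe, map_tmul,
      LinearMap.convMul_apply, LinearMap.mul'_apply]
    induction Coalgebra.comul (R := k) h using TensorProduct.induction_on with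
    | zero => simp
    | tmul g g' => simp
    | add w₁ w₂ h₁ h₂ => simp only [tmul_add, map_add, mul_add, h₁, h₂]
  calc δ (twist δ f a)
      = LinearMap.mul' k (A ⊗[k] H) ((δ.toLinearMap ∘ₗ f).lTensor (A ⊗[k] H)
          ((TensorProduct.assoc k A H H).symm (Coalgebra.comul.lTensor A (δ a)))) := by
        rw [twist_apply, hL, LinearMap.map_lTensor, ← rTensor_delta_delta hδ,
          ← LinearMap.comp_apply (LinearMap.lTensor _ _), LinearMap.lTensor_comp_rTensor]
    _ = LinearMap.mul' k (A ⊗[k] H)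
          (TensorProduct.map ι₁ (toConv ι₂ * toConv (δ.toLinearMap ∘ₗ f)).ofConv (δ a)) :=
        LinearMap.congr_fun hX (δ a)
    _ = LinearMap.mul' k (A ⊗[k] H)
          (TensorProduct.map ι₁ (toConv (ι₁ ∘ₗ f) * toConv ι₂).ofConv (δ a)) := by
        rw [hf]
    _ = (LinearMap.mul' k A ∘ₗ f.lTensor A).rTensor H
          ((TensorProduct.assoc k A H H).symm (Coalgebra.comul.lTensor A (δ a))) :=
        (LinearMap.congr_fun hY (δ a)).symm
    _ = (twist δ f).rTensor H (δ a) := by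
        rw [← rTensor_delta_delta hδ, ← LinearMap.comp_apply (LinearMap.rTensor _ _),
          ← LinearMap.rTensor_comp]
        rfl

theorem twist_comp_twist (hδ : IsCoaction δ) {f : H →ₗ[k] A}
    (hf : ∀ a : A, δ (twist δ f a) = (twist δ f).rTensor H (δ a)) (g : H →ₗ[k] A) :
    twist δ g ∘ₗ twist δ f = twist δ (toConv f * toConv g).ofConv := by
  have hZ : LinearMap.mul' k A ∘ₗ TensorProduct.map (LinearMap.mul' k A ∘ₗ f.lTensor A) g ∘ₗ
      (TensorProduct.assoc k A H H).symm.toLinearMap ∘ₗ Coalgebra.comul.lTensor A =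
      LinearMap.mul' k A ∘ₗ (toConv f * toConv g).ofConv.lTensor A := by
    refine TensorProduct.ext' fun a' h => ?_
    simp only [LinearMap.comp_apply, LinearMap.lTensor_tmul, LinearEquiv.coe_coe,
      LinearMap.convMul_apply, LinearMap.mul'_apply]
    induction Coalgebra.comul (R := k) h using TensorProduct.induction_on with
    | zero => simp
    | tmul g₁ g₂ => simp [mul_assoc]
    | add w₁ w₂ h₁ h₂ => simp only [tmul_add, map_add, mul_add, h₁, h₂]
  ext a
  calc twist δ g (twist δ f a)
      = LinearMap.mul' k A (TensorProduct.map (LinearMap.mul' k A ∘ₗ f.lTensor A) g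
          (δ.toLinearMap.rTensor H (δ a))) := by
        rw [twist_apply, hf, ← LinearMap.comp_apply (LinearMap.lTensor _ _),
          LinearMap.lTensor_comp_rTensor, LinearMap.map_rTensor]
        rfl
    _ = twist δ (toConv f * toConv g).ofConv a := by
        rw [rTensor_delta_delta hδ]
        exact LinearMap.congr_fun hZ (δ a)

theorem apply_mk_one_tmul
    (hχ : ∀ z : A ⊗[k] A, χ (Submodule.Quotient.mk z) = canMap δ z)
    {Ψ : QB δ →ₗ[k] A} {G : A →ₗ[k] A}
    (hΨ : ∀ a x y : A, Ψ (Submodule.Quotient.mk ((a * x) ⊗ₜ[k] y)) =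
      G a * Ψ (Submodule.Quotient.mk (x ⊗ₜ[k] y))) (a : A) :
    Ψ (Submodule.Quotient.mk (1 ⊗ₜ[k] a)) =
      LinearMap.mul' k A (TensorProduct.map G (Ψ ∘ₗ tauMap δ χ) (δ a)) := by
  have hmulLeft : ∀ a, Ψ ∘ₗ QB.mulLeft δ a = LinearMap.mulLeft k (G a) ∘ₗ Ψ := fun a =>
    QB.hom_ext fun x y => hΨ a x y
  have hchi : Ψ ∘ₗ χ.symm.toLinearMap =
      LinearMap.mul' k A ∘ₗ TensorProduct.map G (Ψ ∘ₗ tauMap δ χ) :=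
    TensorProduct.ext' fun a h => by
      simpa [chi_symm_tmul hχ] using LinearMap.congr_fun (hmulLeft a) (tauMap δ χ h)
  rw [← chi_symm_delta hχ]
  exact LinearMap.congr_fun hchi (δ a)

theorem twist_leftInverse
    (hχ : ∀ z : A ⊗[k] A, χ (Submodule.Quotient.mk z) = canMap δ z) {F : A →ₐ[k] A}
    {Φ : QB δ →ₗ[k] A} (hF : ∀ a : A, δ (F a) = F.toLinearMap.rTensor H (δ a))
    (hΦ : ∀ x y : A, Φ (Submodule.Quotient.mk (x ⊗ₜ[k] y)) = F x * y) :
    Function.LeftInverse (twist δ (Φ ∘ₗ tauMap δ χ)) F := fun a => by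
  have := apply_mk_one_tmul hχ (Ψ := Φ) (G := F.toLinearMap)
    (fun a x y => by simp [hΦ, mul_assoc]) a
  rw [hΦ, map_one, one_mul] at this
  rw [twist_apply, hF, ← LinearMap.comp_apply (LinearMap.lTensor _ _),
    LinearMap.lTensor_comp_rTensor, ← this]

theorem toLinearMap_eq_twist
    (hχ : ∀ z : A ⊗[k] A, χ (Submodule.Quotient.mk z) = canMap δ z) {F : A →ₐ[k] A}
    (hF : ∀ b ∈ coinv δ, F b = b) :
    F.toLinearMap = twist δ (QB.mulMapRight δ F hF ∘ₗ tauMap δ χ) := by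
  ext a
  have := apply_mk_one_tmul hχ (Ψ := QB.mulMapRight δ F hF) (G := LinearMap.id)
    (fun a x y => by simp [mul_assoc]) a
  rwa [QB.mulMapRight_mk, one_mul] at this

theorem convMul_mulMapRight_eq_one
    (hχ : ∀ z : A ⊗[k] A, χ (Submodule.Quotient.mk z) = canMap δ z) (hδ : IsCoaction δ)
    {F : A →ₐ[k] A} {Φ : QB δ →ₗ[k] A} (hF : ∀ b ∈ coinv δ, F b = b)
    (hΦ : ∀ x y : A, Φ (Submodule.Quotient.mk (x ⊗ₜ[k] y)) = F x * y) :
    toConv (Φ ∘ₗ tauMap δ χ) * toConv (QB.mulMapRight δ F hF ∘ₗ tauMap δ χ) = 1 := by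
  have hY : LinearMap.mul' k A ∘ₗ
      TensorProduct.map Φ (QB.mulMapRight δ F hF ∘ₗ tauMap δ χ) ∘ₗ QB.coactRight δ =
      F.toLinearMap ∘ₗ QB.mul δ := by
    refine QB.hom_ext fun x y => ?_
    have hFy := LinearMap.congr_fun (toLinearMap_eq_twist hχ hF) y
    simp only [LinearMap.comp_apply, QB.coactRight_mk, QB.mul_mk, AlgHom.toLinearMap_apply,
      map_mul] at hFy ⊢
    rw [hFy, twist_apply]
    induction δ y using TensorProduct.induction_on with
    | zero => simp
    | tmul c h => simp [hΦ, mul_assoc]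
    | add t₁ t₂ h₁ h₂ => simp only [tmul_add, map_add, mul_add, h₁, h₂]
  ext h
  have := LinearMap.congr_fun hY (tauMap δ χ h)
  simp only [LinearMap.comp_apply, coactRight_tauMap hχ hδ, LinearMap.map_rTensor,
    AlgHom.toLinearMap_apply, mul_tauMap hχ hδ, map_smul, map_one] at this
  simp [this, Algebra.algebraMap_eq_smul_one]

end HopfGalois

open HopfGalois

theorem isGauge_id (δ : A →ₐ[k] A ⊗[k] H) : IsGauge δ (AlgHom.id k A) :=
  ⟨fun a => by simp, fun _ _ => rfl⟩

theorem IsGauge.comp {δ : A →ₐ[k] A ⊗[k] H} {F G : A →ₐ[k] A} (hF : IsGauge δ F)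
    (hG : IsGauge δ G) : IsGauge δ (F.comp G) := by
  refine ⟨fun a => ?_, fun b hb => by simp [hG.2 b hb, hF.2 b hb]⟩
  rw [AlgHom.comp_apply, hF.1, hG.1, ← LinearMap.comp_apply, ← LinearMap.rTensor_comp]
  rfl

theorem gauge_transformations_group_general
    (δ : A →ₐ[k] A ⊗[k] H) (hδ : IsCoaction δ)
    (χ : QB δ ≃ₗ[k] A ⊗[k] H)
    (hχ : ∀ z : A ⊗[k] A, χ (Submodule.Quotient.mk z) = canMap δ z) :
    IsGauge δ (AlgHom.id k A) ∧
    (∀ F G : A →ₐ[k] A, IsGauge δ F → IsGauge δ G → IsGauge δ (F.comp G)) ∧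
    (∀ F : A →ₐ[k] A, IsGauge δ F →
      ∀ ΦF : QB δ →ₗ[k] A,
        (∀ x y : A, ΦF (Submodule.Quotient.mk (x ⊗ₜ[k] y)) = F x * y) →
        ∀ Finv : A →ₗ[k] A,
          Finv = (TensorProduct.lift
              (((LinearMap.llcomp k H A A).flip (ΦF ∘ₗ tauMap δ χ)) ∘ₗ
                (LinearMap.mul k A))) ∘ₗ δ.toLinearMap →
          (∀ a : A, Finv (F a) = a) ∧ (∀ a : A, F (Finv a) = a) ∧
          (∀ a a' : A, Finv (a * a') = Finv a * Finv a') ∧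
          Finv 1 = 1 ∧
          (∀ a : A, δ (Finv a) = (LinearMap.rTensor H Finv) (δ a)) ∧
          (∀ b ∈ coinv δ, Finv b = b)) := by
  refine ⟨isGauge_id δ, fun F G hF hG => hF.comp hG, ?_⟩
  rintro F ⟨hFδ, hFB⟩ Φ hΦ Finv rfl
  have hFinv : TensorProduct.lift (((LinearMap.llcomp k H A A).flip (Φ ∘ₗ tauMap δ χ)) ∘ₗ
      LinearMap.mul k A) ∘ₗ δ.toLinearMap = twist δ (Φ ∘ₗ tauMap δ χ) := by
    rw [twist, ← LinearMap.comp_assoc]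
    congr 1
    exact TensorProduct.ext' fun a h => by simp
  rw [hFinv]
  have hleft := twist_leftInverse hχ hFδ hΦ
  have hequiv := delta_twist hδ (includeRight_convMul_delta_comp hχ hδ hFδ hΦ)
  have hright : Function.RightInverse (twist δ (Φ ∘ₗ tauMap δ χ)) F := by
    have hcomp := twist_comp_twist hδ hequiv (QB.mulMapRight δ F hFB ∘ₗ tauMap δ χ)
    rw [convMul_mulMapRight_eq_one hχ hδ hFB hΦ, twist_one hδ,
      ← toLinearMap_eq_twist hχ hFB] at hcomp
    exact LinearMap.congr_fun hcomp
  refine ⟨hleft, hright, fun a a' => hleft.injective ?_, by simpa using hleft 1, hequiv,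
    fun b hb => by simpa [hFB b hb] using hleft b⟩
  rw [map_mul F, hright, hright, hright]

/-- for a faithfully flat Hopf–Galois extension the gauge
transformations form a group under composition, and the inverse of `F` is
`F⁻¹(a) = a₍₀₎ F(a₍₁₎⁽¹⁾) a₍₁₎⁽²⁾`. -/
theorem gauge_transformations_group
    (δ : A →ₐ[k] A ⊗[k] H) (hδ : IsCoaction δ)
    (χ : QB δ ≃ₗ[k] A ⊗[k] H)
    (hχ : ∀ z : A ⊗[k] A, χ (Submodule.Quotient.mk z) = canMap δ z)
    (hff : FaithfullyFlatCoinv δ) :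
    IsGauge δ (AlgHom.id k A) ∧
    (∀ F G : A →ₐ[k] A, IsGauge δ F → IsGauge δ G → IsGauge δ (F.comp G)) ∧
    (∀ F : A →ₐ[k] A, IsGauge δ F →
      ∀ ΦF : QB δ →ₗ[k] A,
        (∀ x y : A, ΦF (Submodule.Quotient.mk (x ⊗ₜ[k] y)) = F x * y) →
        ∀ Finv : A →ₗ[k] A,
          Finv = (TensorProduct.lift
              (((LinearMap.llcomp k H A A).flip (ΦF ∘ₗ tauMap δ χ)) ∘ₗ
                (LinearMap.mul k A))) ∘ₗ δ.toLinearMap →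
          (∀ a : A, Finv (F a) = a) ∧ (∀ a : A, F (Finv a) = a) ∧
          (∀ a a' : A, Finv (a * a') = Finv a * Finv a') ∧
          Finv 1 = 1 ∧
          (∀ a : A, δ (Finv a) = (LinearMap.rTensor H Finv) (δ a)) ∧
          (∀ b ∈ coinv δ, Finv b = b)) :=
  gauge_transformations_group_general δ hδ χ hχ

end
end

section
/- Let N ≥ 2, q a primitive N-th root of unity, and T_N the Taft algebra. For any s ∈ ℂ, the algebra A_s generated by X, G with relations X^N = s, G^N = 1, XG = q GX is a right T_N-comodule algebra under δ(X) = 1⊗x + X⊗g, δ(G) = G⊗g, and its subalgebra of coinvariants is exactly ℂ·1; hence A_s is a T_N-Galois object. -/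
/-!
The canonical map sends `b ⊗ e` to `(b ⊗ 1) δ(e)`, so its image is stable under left
multiplication by `A ⊗ 1` and right multiplication by `δ(A)`. Consequently the `t ∈ T` with
`A ⊗ t` inside the image form a subalgebra of `T`. It contains `g`, because `δ(G) = G ⊗ g` with
`G` invertible, and then `x`, because `1 ⊗ x = δ(X) - X ⊗ g`; so it is all of `T` and the
canonical map is onto. Source and target both have dimension `N⁴`, so the map is bijective.
If `δ(a) = a ⊗ 1`, then `1 ⊗ a` and `a ⊗ 1` have the same image, hence are equal, which forces
`a` to be a scalar. The comodule axioms are identities between algebra maps, so it suffices to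
check them on the generators `X` and `G`.
-/

open TensorProduct

noncomputable section

variable {T A : Type*} [Ring T] [HopfAlgebra ℂ T] [Ring A] [Algebra ℂ A]

/-- The canonical Galois map `A ⊗ A → A ⊗ T`, `a' ⊗ a ↦ a' a₍₀₎ ⊗ a₍₁₎`.  Since
the coinvariants are the scalars, the balanced tensor product is `A ⊗[ℂ] A`. -/
def canMapPt (δ : A →ₐ[ℂ] A ⊗[ℂ] T) : A ⊗[ℂ] A →ₗ[ℂ] A ⊗[ℂ] T :=
  (LinearMap.rTensor T (LinearMap.mul' ℂ A)) ∘ₗ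
    ((TensorProduct.assoc ℂ A A T).symm.toLinearMap) ∘ₗ
      (LinearMap.lTensor A δ.toLinearMap)

theorem Algebra.adjoin_pair_eq_top_of_basis {R B ι : Type*} [CommSemiring R] [Semiring B]
    [Algebra R B] (b : Module.Basis ι R B) {u v : B} (m n : ι → ℕ)
    (hb : ∀ i, b i = u ^ m i * v ^ n i) : Algebra.adjoin R {u, v} = ⊤ := by
  rw [← Algebra.toSubmodule_eq_top, ← top_le_iff, ← b.span_eq, Submodule.span_le]
  rintro _ ⟨i, rfl⟩
  rw [hb]
  exact Subalgebra.mul_mem _ (pow_mem (Algebra.subset_adjoin (by simp)) _)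
    (pow_mem (Algebra.subset_adjoin (by simp)) _)

theorem Algebra.mem_range_algebraMap_of_one_tmul_eq_tmul_one {K B : Type*} [Field K] [Ring B]
    [Algebra K B] {a : B} (h : (1 : B) ⊗ₜ[K] a = a ⊗ₜ 1) : a ∈ Set.range (algebraMap K B) := by
  rcases subsingleton_or_nontrivial B with hB | hB
  · exact ⟨0, Subsingleton.elim _ _⟩
  obtain ⟨f, hf⟩ := Module.Projective.exists_dual_eq_one K (one_ne_zero : (1 : B) ≠ 0)
  refine ⟨f a, ?_⟩
  have := congrArg (TensorProduct.lid K B ∘ LinearMap.rTensor B f) h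
  simpa [hf, Algebra.algebraMap_eq_smul_one] using this.symm

section Comodule

variable {R B H : Type*} [CommSemiring R] [Semiring B] [Algebra R B] [Semiring H]
  [Bialgebra R H] {s : Set B} (δ : B →ₐ[R] B ⊗[R] H)

theorem rid_lTensor_counit_of_adjoin_eq_top (hs : Algebra.adjoin R s = ⊤)
    (h : ∀ u ∈ s, TensorProduct.rid R B (LinearMap.lTensor B Coalgebra.counit (δ u)) = u)
    (a : B) : TensorProduct.rid R B (LinearMap.lTensor B Coalgebra.counit (δ a)) = a :=
  DFunLike.congr_fun (AlgHom.ext_of_adjoin_eq_top hs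
    (φ₁ := (Algebra.TensorProduct.rid R R B).toAlgHom.comp
      ((Algebra.TensorProduct.map (AlgHom.id R B) (Bialgebra.counitAlgHom R H)).comp δ))
    (φ₂ := AlgHom.id R B) h) a

theorem assoc_rTensor_eq_lTensor_comul_of_adjoin_eq_top (hs : Algebra.adjoin R s = ⊤)
    (h : ∀ u ∈ s, TensorProduct.assoc R B H H (LinearMap.rTensor H δ.toLinearMap (δ u)) =
      LinearMap.lTensor B Coalgebra.comul (δ u))
    (a : B) : TensorProduct.assoc R B H H (LinearMap.rTensor H δ.toLinearMap (δ a)) =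
      LinearMap.lTensor B Coalgebra.comul (δ a) :=
  DFunLike.congr_fun (AlgHom.ext_of_adjoin_eq_top hs
    (φ₁ := (Algebra.TensorProduct.assoc R R R B H H).toAlgHom.comp
      ((Algebra.TensorProduct.map δ (AlgHom.id R H)).comp δ))
    (φ₂ := (Algebra.TensorProduct.map (AlgHom.id R B) (Bialgebra.comulAlgHom R H)).comp δ) h) a

end Comodule

section Galois

variable (δ : A →ₐ[ℂ] A ⊗[ℂ] T)

theorem canMapPt_tmul (b e : A) : canMapPt δ (b ⊗ₜ e) = (b ⊗ₜ 1) * δ e := by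
  simp only [canMapPt, LinearMap.coe_comp, Function.comp_apply, LinearMap.lTensor_tmul,
    AlgHom.toLinearMap_apply, LinearEquiv.coe_coe]
  induction δ e using TensorProduct.induction_on with
  | zero => simp
  | tmul c t => simp
  | add u v hu hv => simp [tmul_add, mul_add, hu, hv]

theorem tmul_one_mem_range_canMapPt (a : A) : a ⊗ₜ (1 : T) ∈ LinearMap.range (canMapPt δ) :=
  ⟨a ⊗ₜ 1, by rw [canMapPt_tmul, map_one, mul_one]⟩

theorem mul_mem_range_canMapPt {r : A ⊗[ℂ] T} (hr : r ∈ LinearMap.range (canMapPt δ)) (e : A) :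
    r * δ e ∈ LinearMap.range (canMapPt δ) := by
  obtain ⟨w, rfl⟩ := hr
  induction w using TensorProduct.induction_on with
  | zero => simp
  | tmul b e' => exact ⟨b ⊗ₜ (e' * e), by rw [canMapPt_tmul, canMapPt_tmul, map_mul, mul_assoc]⟩
  | add u v hu hv => rw [map_add, add_mul]; exact add_mem hu hv

theorem tmul_mul_mem_range_canMapPt {t : T}
    (ht : ∀ a : A, a ⊗ₜ t ∈ LinearMap.range (canMapPt δ)) (a : A) {r : A ⊗[ℂ] T}
    (hr : r ∈ LinearMap.range (canMapPt δ)) : (a ⊗ₜ t) * r ∈ LinearMap.range (canMapPt δ) := by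
  obtain ⟨w, rfl⟩ := hr
  induction w using TensorProduct.induction_on with
  | zero => simp
  | tmul b e =>
    rw [canMapPt_tmul, ← mul_assoc, Algebra.TensorProduct.tmul_mul_tmul, mul_one]
    exact mul_mem_range_canMapPt δ (ht (a * b)) e
  | add u v hu hv => rw [map_add, mul_add]; exact add_mem hu hv

def canMapPtRangeSubalgebra : Subalgebra ℂ T where
  carrier := {t | ∀ a : A, a ⊗ₜ t ∈ LinearMap.range (canMapPt δ)}
  mul_mem' {t t'} ht ht' a := by
    have : a ⊗ₜ[ℂ] (t * t') = (a ⊗ₜ[ℂ] t) * ((1 : A) ⊗ₜ[ℂ] t') := by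
      rw [Algebra.TensorProduct.tmul_mul_tmul, mul_one]
    rw [this]
    exact tmul_mul_mem_range_canMapPt δ ht a (ht' 1)
  add_mem' ht ht' a := by
    rw [tmul_add]
    exact add_mem (ht a) (ht' a)
  algebraMap_mem' c a := by
    rw [Algebra.algebraMap_eq_smul_one, tmul_smul]
    exact Submodule.smul_mem _ c (tmul_one_mem_range_canMapPt δ a)

theorem canMapPt_surjective_of_adjoin_eq_top {s : Set T} (hs : Algebra.adjoin ℂ s = ⊤)
    (h : ∀ t ∈ s, ∀ a : A, a ⊗ₜ t ∈ LinearMap.range (canMapPt δ)) :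
    Function.Surjective (canMapPt δ) := by
  have hS : canMapPtRangeSubalgebra δ = ⊤ := top_unique (hs ▸ Algebra.adjoin_le h)
  rw [← LinearMap.range_eq_top, eq_top_iff, ← TensorProduct.span_tmul_eq_top, Submodule.span_le]
  rintro _ ⟨a, t, rfl⟩
  exact (hS ▸ Algebra.mem_top : t ∈ canMapPtRangeSubalgebra δ) a

theorem tmul_mem_range_canMapPt_of_grouplike {u : A} (hu : IsUnit u) {t : T}
    (hδu : δ u = u ⊗ₜ t) (a : A) : a ⊗ₜ t ∈ LinearMap.range (canMapPt δ) := by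
  obtain ⟨u, rfl⟩ := hu
  refine ⟨(a * ↑u⁻¹) ⊗ₜ u, ?_⟩
  rw [canMapPt_tmul, hδu, Algebra.TensorProduct.tmul_mul_tmul, mul_assoc, Units.inv_mul,
    mul_one, one_mul]

theorem tmul_mem_range_canMapPt_of_skewPrimitive {v : A} {x t : T}
    (hδv : δ v = 1 ⊗ₜ x + v ⊗ₜ t) (ht : ∀ a : A, a ⊗ₜ t ∈ LinearMap.range (canMapPt δ))
    (a : A) : a ⊗ₜ x ∈ LinearMap.range (canMapPt δ) := by
  have : a ⊗ₜ x = canMapPt δ (a ⊗ₜ v) - (a * v) ⊗ₜ t := by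
    rw [canMapPt_tmul, hδv, mul_add, Algebra.TensorProduct.tmul_mul_tmul,
      Algebra.TensorProduct.tmul_mul_tmul, mul_one, one_mul, one_mul, add_sub_cancel_right]
  rw [this]
  exact sub_mem (LinearMap.mem_range_self _ _) (ht _)

theorem canMapPt_bijective_of_surjective [FiniteDimensional ℂ A] [FiniteDimensional ℂ T]
    (hdim : Module.finrank ℂ A = Module.finrank ℂ T) (h : Function.Surjective (canMapPt δ)) :
    Function.Bijective (canMapPt δ) :=
  ⟨(LinearMap.injective_iff_surjective_of_finrank_eq_finrank
    (by rw [Module.finrank_tensorProduct, Module.finrank_tensorProduct, hdim])).mpr h, h⟩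

theorem coinvariants_eq_range_algebraMap_of_injective (h : Function.Injective (canMapPt δ)) :
    {a : A | δ a = a ⊗ₜ[ℂ] 1} = Set.range (algebraMap ℂ A) := by
  ext a
  refine ⟨fun ha => Algebra.mem_range_algebraMap_of_one_tmul_eq_tmul_one (h ?_), ?_⟩
  · rw [canMapPt_tmul, canMapPt_tmul, ha, map_one, mul_one, ← Algebra.TensorProduct.one_def,
      one_mul]
  · rintro ⟨c, rfl⟩
    rw [Set.mem_ofPred_eq, AlgHom.commutes, Algebra.TensorProduct.algebraMap_apply]

end Galois

theorem taft_A_s_galois_object_general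
    (N : ℕ) (hN : 2 ≤ N)
    (x g : T)
    (hcomulx : Coalgebra.comul (R := ℂ) x = 1 ⊗ₜ[ℂ] x + x ⊗ₜ[ℂ] g)
    (hcomulg : Coalgebra.comul (R := ℂ) g = g ⊗ₜ[ℂ] g)
    (hcounitx : Coalgebra.counit (R := ℂ) x = 0)
    (hcounitg : Coalgebra.counit (R := ℂ) g = 1)
    (BT : Module.Basis (Fin N × Fin N) ℂ T)
    (hBT : ∀ p : Fin N × Fin N, BT p = x ^ (p.1 : ℕ) * g ^ (p.2 : ℕ))
    (X G : A)
    (hGN : G ^ N = 1)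
    (BA : Module.Basis (Fin N × Fin N) ℂ A)
    (hBA : ∀ p : Fin N × Fin N, BA p = X ^ (p.1 : ℕ) * G ^ (p.2 : ℕ))
    (δ : A →ₐ[ℂ] A ⊗[ℂ] T)
    (hδX : δ X = 1 ⊗ₜ[ℂ] x + X ⊗ₜ[ℂ] g)
    (hδG : δ G = G ⊗ₜ[ℂ] g) :
    (∀ a : A,
      (TensorProduct.rid ℂ A)
        ((LinearMap.lTensor A (Coalgebra.counit (R := ℂ) (A := T))) (δ a)) = a) ∧
    (∀ a : A,
      (TensorProduct.assoc ℂ A T T)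
        ((LinearMap.rTensor T δ.toLinearMap) (δ a)) =
      (LinearMap.lTensor A (Coalgebra.comul (R := ℂ) (A := T))) (δ a)) ∧
    ({a : A | δ a = a ⊗ₜ[ℂ] 1} = Set.range (algebraMap ℂ A)) ∧
    Function.Bijective (canMapPt δ) := by
  have hA := Algebra.adjoin_pair_eq_top_of_basis BA _ _ hBA
  have hg := tmul_mem_range_canMapPt_of_grouplike δ (IsUnit.of_pow_eq_one hGN (by omega)) hδG
  have hx := tmul_mem_range_canMapPt_of_skewPrimitive δ hδX hg
  have hsurj := canMapPt_surjective_of_adjoin_eq_top δ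
    (Algebra.adjoin_pair_eq_top_of_basis BT _ _ hBT) (by rintro t (rfl | rfl) <;> assumption)
  have : Module.Finite ℂ A := .of_basis BA
  have : Module.Finite ℂ T := .of_basis BT
  have hbij := canMapPt_bijective_of_surjective δ
    (by rw [Module.finrank_eq_card_basis BA, Module.finrank_eq_card_basis BT]) hsurj
  refine ⟨rid_lTensor_counit_of_adjoin_eq_top δ hA ?_,
    assoc_rTensor_eq_lTensor_comul_of_adjoin_eq_top δ hA ?_,
    coinvariants_eq_range_algebraMap_of_injective δ hbij.1, hbij⟩
  · rintro u (rfl | rfl) <;> simp [hδX, hδG, hcounitx, hcounitg]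
  · rintro u (rfl | rfl)
    · simp [hδX, hcomulx, hcomulg, Algebra.TensorProduct.one_def, tmul_add, add_tmul, add_assoc]
    · simp [hδG, hcomulg]

/-- for the Taft algebra `T_N` (generators `x, g`, `x^N = 0`,
`g^N = 1`, `xg = q gx`, `q` a primitive `N`-th root of unity) and any `s ∈ ℂ`,
the algebra `A_s` (generators `X, G`, `X^N = s`, `G^N = 1`, `XG = q GX`) is a
right `T_N`-comodule algebra via `δ(X) = 1 ⊗ x + X ⊗ g`, `δ(G) = G ⊗ g`, its
coinvariants are exactly `ℂ·1`, and `A_s` is a `T_N`-Galois object (the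
canonical map is bijective). -/
theorem taft_A_s_galois_object
    (N : ℕ) (hN : 2 ≤ N) (q : ℂ) (hq : IsPrimitiveRoot q N)
    (x g : T) (hxN : x ^ N = 0) (hgN : g ^ N = 1)
    (hxg : x * g = q • (g * x))
    (hcomulx : Coalgebra.comul (R := ℂ) x = 1 ⊗ₜ[ℂ] x + x ⊗ₜ[ℂ] g)
    (hcomulg : Coalgebra.comul (R := ℂ) g = g ⊗ₜ[ℂ] g)
    (hcounitx : Coalgebra.counit (R := ℂ) x = 0)
    (hcounitg : Coalgebra.counit (R := ℂ) g = 1)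
    (BT : Module.Basis (Fin N × Fin N) ℂ T)
    (hBT : ∀ p : Fin N × Fin N, BT p = x ^ (p.1 : ℕ) * g ^ (p.2 : ℕ))
    (s : ℂ) (X G : A)
    (hXN : X ^ N = s • (1 : A)) (hGN : G ^ N = 1)
    (hXG : X * G = q • (G * X))
    (BA : Module.Basis (Fin N × Fin N) ℂ A)
    (hBA : ∀ p : Fin N × Fin N, BA p = X ^ (p.1 : ℕ) * G ^ (p.2 : ℕ))
    (δ : A →ₐ[ℂ] A ⊗[ℂ] T)
    (hδX : δ X = 1 ⊗ₜ[ℂ] x + X ⊗ₜ[ℂ] g)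
    (hδG : δ G = G ⊗ₜ[ℂ] g) :
    (∀ a : A,
      (TensorProduct.rid ℂ A)
        ((LinearMap.lTensor A (Coalgebra.counit (R := ℂ) (A := T))) (δ a)) = a) ∧
    (∀ a : A,
      (TensorProduct.assoc ℂ A T T)
        ((LinearMap.rTensor T δ.toLinearMap) (δ a)) =
      (LinearMap.lTensor A (Coalgebra.comul (R := ℂ) (A := T))) (δ a)) ∧
    ({a : A | δ a = a ⊗ₜ[ℂ] 1} = Set.range (algebraMap ℂ A)) ∧
    Function.Bijective (canMapPt δ) :=
  taft_A_s_galois_object_general N hN x g hcomulx hcomulg hcounitx hcounitg BT hBT X G hGN BA hBA δ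
    hδX hδG

end
end
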